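/- Let hU, hV, s ∈ ℚ, let k, d ∈ ℚ with k ≠ 0, d ≠ 0, set r := k/d and A := (hU − hV)/2, and define grf_r(t) := ((2t − r)² + r)/(4r). Then ( (min(hU, hV + 2s) + grf_r(s)) − (min(hU, hV + 2(s−1)) + grf_r(s−1)) ) / 2 = max(0, A − (s−1)) − max(0, A − s) + (2sd − k − d)/(2k). -/

import Mathlib

/-!
Writing `A = (hU - hV) / 2`, one has `min hU (hV + 2 t) = hU - 2 max 0 (A - t)`, so the `min`
terms contribute `max 0 (A - (s - 1)) - max 0 (A - s)`. The `grf` terms form a difference of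
squares: `grf_r s - grf_r (s - 1) = (2 s - r - 1) / r`, and substituting `r = k / d` gives the
Hedden–Levine correction `(2 s d - k - d) / (2 k)`.
-/

def grf {K : Type*} [Field K] (r t : K) : K := ((2 * t - r) ^ 2 + r) / (4 * r)

section Min

variable {K : Type*} [Field K] [LinearOrder K] [IsStrictOrderedRing K]

theorem min_add_two_mul_eq (hU hV t : K) :
    min hU (hV + 2 * t) = hU - 2 * max 0 ((hU - hV) / 2 - t) := by
  rw [mul_max_of_nonneg _ _ zero_le_two, mul_zero, ← min_sub_sub_left, sub_zero]
  congr 1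
  ring

theorem half_sub_min_add_two_mul (hU hV s : K) :
    (min hU (hV + 2 * s) - min hU (hV + 2 * (s - 1))) / 2
      = max 0 ((hU - hV) / 2 - (s - 1)) - max 0 ((hU - hV) / 2 - s) := by
  rw [min_add_two_mul_eq, min_add_two_mul_eq]
  ring

end Min

section Grf

variable {K : Type*} [Field K]

theorem grf_sub_grf_sub_one [CharZero K] (r t : K) :
    grf r t - grf r (t - 1) = (2 * t - r - 1) / r := by
  rw [grf, grf, ← sub_div,
    show (2 * t - r) ^ 2 + r - ((2 * (t - 1) - r) ^ 2 + r) = 4 * (2 * t - r - 1) by ring,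
    mul_div_mul_left _ _ (by norm_num : (4 : K) ≠ 0)]

-- At `k = 0` both sides are the junk value `x / 0 = 0`.
theorem half_grf_sub_grf_sub_one_div [CharZero K] (s k d : K) (hd : d ≠ 0) :
    (grf (k / d) s - grf (k / d) (s - 1)) / 2 = (2 * s * d - k - d) / (2 * k) := by
  rw [grf_sub_grf_sub_one]
  rcases eq_or_ne k 0 with rfl | hk
  · simp
  · field_simp

end Grf

theorem dual_knot_alexander_grading_match_general
    (hU hV s k d : ℚ) (hd : d ≠ 0) :
    ((min hU (hV + 2 * s) + ((2 * s - k / d) ^ 2 + k / d) / (4 * (k / d)))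
        - (min hU (hV + 2 * (s - 1))
            + ((2 * (s - 1) - k / d) ^ 2 + k / d) / (4 * (k / d)))) / 2
      = max 0 ((hU - hV) / 2 - (s - 1)) - max 0 ((hU - hV) / 2 - s)
          + (2 * s * d - k - d) / (2 * k) := by
  rw [← half_sub_min_add_two_mul, ← half_grf_sub_grf_sub_one_div s k d hd, grf, grf]
  ring

/-- half the difference of the two dual-knot heights equals the
Hedden–Levine Alexander grading `𝒥 − ℐ`. -/
theorem dual_knot_alexander_grading_match
    (hU hV s k d : ℚ) (hk : k ≠ 0) (hd : d ≠ 0) :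
    ((min hU (hV + 2 * s) + ((2 * s - k / d) ^ 2 + k / d) / (4 * (k / d)))
        - (min hU (hV + 2 * (s - 1))
            + ((2 * (s - 1) - k / d) ^ 2 + k / d) / (4 * (k / d)))) / 2
      = max 0 ((hU - hV) / 2 - (s - 1)) - max 0 ((hU - hV) / 2 - s)
          + (2 * s * d - k - d) / (2 * k) :=
  dual_knot_alexander_grading_match_general hU hV s k d hd
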